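/- Let H be an r×n real matrix of full row rank r and let S* be an r_b×r matrix of the form [0 | D] where D is an r_b×r_b invertible diagonal matrix occupying the last r_b columns. If B = V S* H for an orthogonal m₂×r_b matrix V (VᵀV = I), then B† = H*† D⁻¹ Vᵀ, where H* consists of the bottom r_b rows of H. -/

import Mathlib

open Matrix

/-- The four Penrose conditions characterizing the Moore–Penrose pseudoinverse. -/
def IsMoorePenrose {α β : Type*} [Fintype α] [Fintype β]
    (B : Matrix α β ℝ) (Bp : Matrix β α ℝ) : Prop :=
  B * Bp * B = B ∧ Bp * B * Bp = Bp ∧ (B * Bp)ᵀ = B * Bp ∧ (Bp * B)ᵀ = Bp * B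

lemma mp_unique {α β : Type*} [Fintype α] [Fintype β]
    {B : Matrix α β ℝ} {P Q : Matrix β α ℝ}
    (hP : IsMoorePenrose B P) (hQ : IsMoorePenrose B Q) :
    P = Q := by
  obtain ⟨hP1, hP2, hP3, hP4⟩ := hP
  obtain ⟨hQ1, hQ2, hQ3, hQ4⟩ := hQ
  have hBP : B * P = B * Q := by
    calc B * P = (B * Q * B) * P := by rw [hQ1]
    _ = (B * Q) * (B * P) := by simp only [Matrix.mul_assoc]
    _ = (B * Q)ᵀ * (B * P)ᵀ := by rw [hQ3, hP3]
    _ = ((B * P) * (B * Q))ᵀ := by simp only [transpose_mul, Matrix.mul_assoc]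
    _ = ((B * P * B) * Q)ᵀ := by simp only [Matrix.mul_assoc]
    _ = (B * Q)ᵀ := by rw [hP1]
    _ = B * Q := hQ3
  have hPB : P * B = Q * B := by
    calc P * B = P * (B * Q * B) := by rw [hQ1]
    _ = (P * B) * (Q * B) := by simp only [Matrix.mul_assoc]
    _ = (P * B)ᵀ * (Q * B)ᵀ := by rw [hP4, hQ4]
    _ = ((Q * B) * (P * B))ᵀ := by simp only [transpose_mul, Matrix.mul_assoc]
    _ = (Q * (B * P * B))ᵀ := by simp only [Matrix.mul_assoc]
    _ = (Q * B)ᵀ := by rw [hP1]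
    _ = Q * B := hQ4
  calc P = P * B * P := hP2.symm
  _ = Q * B * P := by rw [hPB]
  _ = Q * (B * Q) := by rw [Matrix.mul_assoc, hBP]
  _ = Q * B * Q := by rw [Matrix.mul_assoc]
  _ = Q := hQ2

theorem stmt5 (r₀ rb m₂ n : ℕ)
    (H : Matrix (Fin r₀ ⊕ Fin rb) (Fin n) ℝ)
    (hH : H.rank = r₀ + rb)
    (d : Fin rb → ℝ) (hd : ∀ i, d i ≠ 0)
    (Sstar : Matrix (Fin rb) (Fin r₀ ⊕ Fin rb) ℝ)
    (hS : Sstar = Matrix.fromCols 0 (Matrix.diagonal d))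
    (V : Matrix (Fin m₂) (Fin rb) ℝ) (hV : Vᵀ * V = 1)
    (B : Matrix (Fin m₂) (Fin n) ℝ) (hB : B = V * Sstar * H)
    (Hstar : Matrix (Fin rb) (Fin n) ℝ) (hHstar : Hstar = H.submatrix Sum.inr id)
    (Bp : Matrix (Fin n) (Fin m₂) ℝ) (hBp : IsMoorePenrose B Bp)
    (Hp : Matrix (Fin n) (Fin rb) ℝ) (hHp : IsMoorePenrose Hstar Hp) :
    Bp = Hp * (Matrix.diagonal d)⁻¹ * Vᵀ := by
  classical
  set D : Matrix (Fin rb) (Fin rb) ℝ := Matrix.diagonal d with hD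
  have hdet : IsUnit D.det := by
    rw [hD, det_diagonal]
    exact isUnit_iff_ne_zero.mpr (Finset.prod_ne_zero_iff.mpr fun i _ => hd i)
  have hDinv : D * D⁻¹ = 1 := mul_nonsing_inv _ hdet
  have hinvD : D⁻¹ * D = 1 := nonsing_inv_mul _ hdet
  -- S* H = D H*
  have hSH : Sstar * H = D * Hstar := by
    subst hS hHstar
    rw [hD]
    ext i j
    simp [Matrix.mul_apply, Fintype.sum_sum_type, Matrix.fromCols,
      Matrix.diagonal_apply, ite_mul, Finset.sum_ite_eq]
  -- rows of H* are linearly independent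
  have hli : LinearIndependent ℝ (fun i => H i) := by
    rw [linearIndependent_iff_card_eq_finrank_span]
    rw [Set.finrank, show (Set.range fun i => H i) = Set.range H.row from rfl,
      ← rank_eq_finrank_span_row, hH]
    simp
  have hliStar : LinearIndependent ℝ (fun i => Hstar i) := by
    rw [hHstar]
    exact hli.comp Sum.inr Sum.inr_injective
  have hinj : Function.Injective Hstar.vecMul := vecMul_injective_iff.mpr hliStar
  have key : ∀ (A : Matrix (Fin rb) (Fin rb) ℝ) (i : Fin rb),
      (A * Hstar) i = Hstar.vecMul (A i) := by
    intro A i; funext j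
    simp [Matrix.mul_apply, Matrix.vecMul, dotProduct]
  -- H* Hp = 1 (full row rank)
  have hHpH : Hstar * Hp = 1 := by
    funext i j
    have h1 : Hstar.vecMul ((Hstar * Hp) i)
        = Hstar.vecMul ((1 : Matrix (Fin rb) (Fin rb) ℝ) i) := by
      rw [← key, ← key, Matrix.one_mul, hHp.1]
    exact congrFun (hinj h1) j
  have hB' : B = V * D * Hstar := by
    rw [hB, Matrix.mul_assoc, hSH, ← Matrix.mul_assoc]
  -- candidate check
  set C : Matrix (Fin n) (Fin m₂) ℝ := Hp * D⁻¹ * Vᵀ with hC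
  have hBC : B * C = V * Vᵀ := by
    rw [hB', hC]
    calc V * D * Hstar * (Hp * D⁻¹ * Vᵀ)
        = V * (D * ((Hstar * Hp) * (D⁻¹ * Vᵀ))) := by simp only [Matrix.mul_assoc]
    _ = V * (D * (D⁻¹ * Vᵀ)) := by rw [hHpH, Matrix.one_mul]
    _ = V * ((D * D⁻¹) * Vᵀ) := by simp only [Matrix.mul_assoc]
    _ = V * Vᵀ := by rw [hDinv, Matrix.one_mul]
  have hCB : C * B = Hp * Hstar := by
    rw [hB', hC]
    calc Hp * D⁻¹ * Vᵀ * (V * D * Hstar)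
        = Hp * (D⁻¹ * ((Vᵀ * V) * (D * Hstar))) := by simp only [Matrix.mul_assoc]
    _ = Hp * (D⁻¹ * (D * Hstar)) := by rw [hV, Matrix.one_mul]
    _ = Hp * ((D⁻¹ * D) * Hstar) := by simp only [Matrix.mul_assoc]
    _ = Hp * Hstar := by rw [hinvD, Matrix.one_mul]
  have hCmp : IsMoorePenrose B C := by
    refine ⟨?_, ?_, ?_, ?_⟩
    · rw [hBC, hB']
      calc V * Vᵀ * (V * D * Hstar) = V * ((Vᵀ * V) * (D * Hstar)) := by
            simp only [Matrix.mul_assoc]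
      _ = V * (D * Hstar) := by rw [hV, Matrix.one_mul]
      _ = V * D * Hstar := by rw [Matrix.mul_assoc]
    · rw [hCB, hC]
      calc Hp * Hstar * (Hp * D⁻¹ * Vᵀ) = (Hp * Hstar * Hp) * (D⁻¹ * Vᵀ) := by
            simp only [Matrix.mul_assoc]
      _ = Hp * (D⁻¹ * Vᵀ) := by rw [hHp.2.1]
      _ = Hp * D⁻¹ * Vᵀ := by rw [Matrix.mul_assoc]
    · rw [hBC]; simp
    · rw [hCB, hHp.2.2.2]
  exact mp_unique hBp hCmp
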